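/- For the two-type cooperative model, the transition kernels are super-additive: for all natural numbers x, x', y, y', the convolution μ_{(x,y)} * μ_{(x',y')} is stochastically dominated by μ_{(x+x', y+y')}. -/
import Mathlib


open MeasureTheory ProbabilityTheory Filter
open scoped ENNReal

/-- Convolution of two measures on `ℕ`. -/
noncomputable def mconv (μ ν : Measure ℕ) : Measure ℕ :=
  Measure.map (fun p : ℕ × ℕ => p.1 + p.2) (μ.prod ν)

/-- `i`-fold convolution power of a measure on `ℕ`. -/
noncomputable def convPow (ν : Measure ℕ) : ℕ → Measure ℕ
  | 0 => Measure.dirac 0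
  | n + 1 => mconv (convPow ν n) ν

/-- The Bernoulli measure with parameter `r` on `ℕ`. -/
noncomputable def bern (r : ℝ) : Measure ℕ :=
  ENNReal.ofReal (1 - r) • Measure.dirac 0 + ENNReal.ofReal r • Measure.dirac 1

/-- The binomial distribution `Bin(n, r)` as a measure on `ℕ`. -/
noncomputable def binomM (n : ℕ) (r : ℝ) : Measure ℕ := convPow (bern r) n

/-- Transition measure of the cooperative model from state `(x, y)`:
`Ber(2,q)^{*(x+y)} ⊗ Ber(2,p)^{*min(x,y)}`. -/
noncomputable def coopStep (p q : ℝ) (x y : ℕ) : Measure (ℕ × ℕ) :=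
  (binomM (2 * (x + y)) q).prod (binomM (2 * min x y) p)

/-- `(XY n)` is the cooperative two-type Markov chain with parameters `p, q`
started from `(x, y)`, characterized by its finite-dimensional distributions. -/
def IsCoop {Ω : Type*} [MeasurableSpace Ω] (P : Measure Ω)
    (XY : ℕ → Ω → ℕ × ℕ) (p q : ℝ) (x y : ℕ) : Prop :=
  ∀ n : ℕ, ∀ a : ℕ → ℕ × ℕ,
    P {ω | ∀ k ≤ n, XY k ω = a k} =
      (if a 0 = (x, y) then 1 else 0) *
        ∏ k ∈ Finset.range n, coopStep p q (a k).1 (a k).2 {a (k + 1)}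

/-- Convolution of two measures on `ℕ × ℕ`. -/
noncomputable def mconv2 (μ ν : Measure (ℕ × ℕ)) : Measure (ℕ × ℕ) :=
  Measure.map (fun p : (ℕ × ℕ) × (ℕ × ℕ) => p.1 + p.2) (μ.prod ν)

lemma isProb_bern {r : ℝ} (h0 : 0 ≤ r) (h1 : r ≤ 1) : IsProbabilityMeasure (bern r) := by
  constructor
  simp only [bern, Measure.add_apply, Measure.smul_apply, measure_univ, smul_eq_mul, mul_one,
    ← ENNReal.ofReal_add (by linarith : (0:ℝ) ≤ 1 - r) h0]
  norm_num

lemma isProb_mconv {μ ν : Measure ℕ} (hμ : IsProbabilityMeasure μ)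
    (hν : IsProbabilityMeasure ν) : IsProbabilityMeasure (mconv μ ν) :=
  Measure.isProbabilityMeasure_map (measurable_of_countable _).aemeasurable

lemma isProb_binom {n : ℕ} {r : ℝ} (h0 : 0 ≤ r) (h1 : r ≤ 1) :
    IsProbabilityMeasure (binomM n r) := by
  induction n with
  | zero => exact ⟨by simp [binomM, convPow]⟩
  | succ n ih => exact isProb_mconv ih (isProb_bern h0 h1)

lemma lintegral_mconv (μ ν : Measure ℕ) [SFinite ν] (g : ℕ → ℝ≥0∞) :
    ∫⁻ s, g s ∂(mconv μ ν) = ∫⁻ a, ∫⁻ b, g (a + b) ∂ν ∂μ := by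
  rw [mconv, lintegral_map (measurable_of_countable g) (measurable_of_countable _),
    lintegral_prod _ (measurable_of_countable _).aemeasurable]

lemma lintegral_mconv2 (μ ν : Measure (ℕ × ℕ)) [SFinite ν] (g : ℕ × ℕ → ℝ≥0∞) :
    ∫⁻ s, g s ∂(mconv2 μ ν) = ∫⁻ a, ∫⁻ b, g (a + b) ∂ν ∂μ := by
  rw [mconv2, lintegral_map (measurable_of_countable g) (measurable_of_countable _),
    lintegral_prod _ (measurable_of_countable _).aemeasurable]

lemma mconv_dirac_zero (μ : Measure ℕ) : mconv μ (Measure.dirac 0) = μ := by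
  ext s hs
  rw [← lintegral_indicator_one hs, ← lintegral_indicator_one hs, lintegral_mconv]
  simp [lintegral_dirac]

lemma mconv_assoc (μ ν ρ : Measure ℕ) [SFinite ν] [SFinite ρ] [SFinite (mconv ν ρ)] :
    mconv (mconv μ ν) ρ = mconv μ (mconv ν ρ) := by
  ext s hs
  rw [← lintegral_indicator_one hs, ← lintegral_indicator_one hs,
    lintegral_mconv, lintegral_mconv, lintegral_mconv]
  congr 1; ext a
  rw [lintegral_mconv]
  simp_rw [add_assoc]

lemma sfinite_mconv (μ ν : Measure ℕ) [SFinite μ] [SFinite ν] : SFinite (mconv μ ν) := by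
  unfold mconv; infer_instance

lemma binom_add (m n : ℕ) {r : ℝ} (h0 : 0 ≤ r) (h1 : r ≤ 1) :
    binomM (m + n) r = mconv (binomM m r) (binomM n r) := by
  induction n with
  | zero => exact (mconv_dirac_zero (binomM m r)).symm
  | succ n ih =>
    haveI := isProb_binom (n := n) (r := r) h0 h1
    haveI := isProb_bern h0 h1
    haveI := sfinite_mconv (binomM n r) (bern r)
    have : m + (n + 1) = (m + n) + 1 := by omega
    rw [this]
    show mconv (convPow (bern r) (m + n)) (bern r) = _
    rw [show convPow (bern r) (m + n) = binomM (m+n) r from rfl, ih, mconv_assoc]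
    rfl

lemma binom_mono {m n : ℕ} (hmn : m ≤ n) {r : ℝ} (h0 : 0 ≤ r) (h1 : r ≤ 1)
    {g : ℕ → ℝ≥0∞} (hg : Monotone g) :
    ∫⁻ s, g s ∂(binomM m r) ≤ ∫⁻ s, g s ∂(binomM n r) := by
  obtain ⟨k, rfl⟩ := Nat.exists_eq_add_of_le hmn
  haveI := isProb_binom (n := k) h0 h1
  rw [binom_add m k h0 h1, lintegral_mconv]
  calc ∫⁻ s, g s ∂(binomM m r) = ∫⁻ a, ∫⁻ _, g a ∂(binomM k r) ∂(binomM m r) := by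
        simp [lintegral_const]
    _ ≤ _ := lintegral_mono fun a => lintegral_mono fun b => hg (Nat.le_add_right a b)

/-- Super-additivity of the cooperative transition kernels: the convolution
`μ_{(x,y)} * μ_{(x',y')}` is stochastically dominated by `μ_{(x+x',y+y')}`. -/
theorem coop_superadditive (p q : ℝ) (hp : p ∈ Set.Ioo (0 : ℝ) 1)
    (hq : q ∈ Set.Ioo (0 : ℝ) 1) (x x' y y' : ℕ) :
    ∀ f : ℕ × ℕ → ℝ≥0∞, Monotone f →
      ∫⁻ z, f z ∂(mconv2 (coopStep p q x y) (coopStep p q x' y')) ≤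
        ∫⁻ z, f z ∂(coopStep p q (x + x') (y + y')) := by
  intro f hf
  obtain ⟨hp0, hp1⟩ := hp
  obtain ⟨hq0, hq1⟩ := hq
  have hp0 := hp0.le; have hp1 := hp1.le; have hq0 := hq0.le; have hq1 := hq1.le
  set A := binomM (2 * (x + y)) q with hA
  set B := binomM (2 * min x y) p with hB
  set C := binomM (2 * (x' + y')) q with hC
  set D := binomM (2 * min x' y') p with hD
  set F := binomM (2 * min (x + x') (y + y')) p with hF
  haveI : IsProbabilityMeasure A := isProb_binom hq0 hq1
  haveI : IsProbabilityMeasure B := isProb_binom hp0 hp1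
  haveI : IsProbabilityMeasure C := isProb_binom hq0 hq1
  haveI : IsProbabilityMeasure D := isProb_binom hp0 hp1
  haveI : IsProbabilityMeasure F := isProb_binom hp0 hp1
  have key : ∀ a c : ℕ, ∫⁻ b, ∫⁻ d, f (a + c, b + d) ∂D ∂B ≤ ∫⁻ s, f (a + c, s) ∂F := by
    intro a c
    have h1 : ∫⁻ b, ∫⁻ d, f (a + c, b + d) ∂D ∂B
        = ∫⁻ s, f (a + c, s) ∂(binomM (2 * min x y + 2 * min x' y') p) := by
      rw [binom_add _ _ hp0 hp1, lintegral_mconv]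
    rw [h1]
    apply binom_mono (by omega) hp0 hp1
    intro s t hst
    exact hf (Prod.mk_le_mk.2 ⟨le_rfl, hst⟩)
  calc ∫⁻ z, f z ∂(mconv2 (coopStep p q x y) (coopStep p q x' y'))
      = ∫⁻ a, ∫⁻ b, ∫⁻ c, ∫⁻ d, f (a + c, b + d) ∂D ∂C ∂B ∂A := by
        rw [coopStep, coopStep, ← hA, ← hB, ← hC, ← hD, lintegral_mconv2,
          lintegral_prod _ (measurable_of_countable _).aemeasurable]
        congr 1; ext a; congr 1; ext b
        rw [lintegral_prod _ (measurable_of_countable _).aemeasurable]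
        simp [Prod.mk_add_mk]
    _ = ∫⁻ a, ∫⁻ c, ∫⁻ b, ∫⁻ d, f (a + c, b + d) ∂D ∂B ∂C ∂A := by
        congr 1; ext a
        exact lintegral_lintegral_swap (measurable_of_countable _).aemeasurable
    _ ≤ ∫⁻ a, ∫⁻ c, ∫⁻ s, f (a + c, s) ∂F ∂C ∂A :=
        lintegral_mono fun a => lintegral_mono fun c => key a c
    _ = ∫⁻ z, f z ∂(coopStep p q (x + x') (y + y')) := by
        rw [coopStep, lintegral_prod _ (measurable_of_countable _).aemeasurable]
        have : 2 * ((x + x') + (y + y')) = 2 * (x + y) + 2 * (x' + y') := by ring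
        rw [this, binom_add _ _ hq0 hq1, ← hA, ← hC, ← hF, lintegral_mconv]
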